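/- Let P and P' be finite measure topological networks and let (π^v, π^e) be optimal couplings realising d = d_{TpOT,2}(P, P'). Define the interpolating network P_t on X̃ = X × X' and Ỹ (the support of π^e) with k_t = (1−t)k + t k', ω_t = (1−t)ω + t ω', ι_t = (1−t)ι + t ι', and measures π^v, π^e. Then for all 0 ≤ s ≤ t ≤ 1, d_{TpOT,2}(P_s, P_t) ≤ (t − s)·d, with the bound witnessed by the identity (diagonal) couplings 1_{π^v} and 1_{π^e}. -/

import Mathlib

open Finset

/-- A finite measure topological network `P = ((X, k, μ), (Y, ι, ν), ω)`. -/
structure FinTopNet where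
  X : Type
  Y : Type
  [finX : Fintype X]
  [finY : Fintype Y]
  k : X → X → ℝ
  μ : X → ℝ
  ι : Y → ℝ × ℝ
  ν : Y → ℝ
  ω : X → Y → ℝ

attribute [instance] FinTopNet.finX FinTopNet.finY

/-- ℓᵖ distance on ℝ², raised to the power `p`. -/
noncomputable def lpp (p : ℝ) (a b : ℝ × ℝ) : ℝ := |a.1 - b.1| ^ p + |a.2 - b.2| ^ p

/-- Projection of a point of ℝ² onto the diagonal. -/
noncomputable def diagProj (a : ℝ × ℝ) : ℝ × ℝ := ((a.1 + a.2) / 2, (a.1 + a.2) / 2)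

/-- Cost (to the power `p`) between augmented persistence-diagram points: the virtual
point `∂` (encoded by `none`) acts as the diagonal projection of the other point. -/
noncomputable def pdCost {Y Y' : Type*} (p : ℝ) (ι : Y → ℝ × ℝ) (ι' : Y' → ℝ × ℝ) :
    Option Y → Option Y' → ℝ
  | some y, some y' => lpp p (ι y) (ι' y')
  | some y, none => lpp p (ι y) (diagProj (ι y))
  | none, some y' => lpp p (diagProj (ι' y')) (ι' y')
  | none, none => 0

/-- Extension of `ω` to the augmented set `Ȳ = Y ∪ {∂}` by `ω(·, ∂) = 0`. -/
def ωbar {X Y : Type*} (ω : X → Y → ℝ) : X → Option Y → ℝ := fun x oy =>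
  match oy with
  | some y => ω x y
  | none => 0

/-- Couplings of finitely supported measures. -/
def IsCoupling {A B : Type*} [Fintype A] [Fintype B]
    (μ : A → ℝ) (μ' : B → ℝ) (π : A → B → ℝ) : Prop :=
  (∀ a b, 0 ≤ π a b) ∧ (∀ a, ∑ b, π a b = μ a) ∧ (∀ b, ∑ a, π a b = μ' b)

/-- Admissible couplings between measures `ν, ν'` on the augmented sets: marginals are
`ν, ν'` on `Y, Y'` and no mass is put on `(∂, ∂)`. -/
def IsAdmissible {Y Y' : Type*} [Fintype Y] [Fintype Y'] (ν : Y → ℝ) (ν' : Y' → ℝ)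
    (π : Option Y → Option Y' → ℝ) : Prop :=
  (∀ a b, 0 ≤ π a b) ∧ (∀ y : Y, ∑ y' : Option Y', π (some y) y' = ν y) ∧
    (∀ y' : Y', ∑ y : Option Y, π y (some y') = ν' y') ∧ π none none = 0

/-- The TpOT objective (before the `1/p` power): persistence-diagram transport term,
Gromov–Wasserstein term, and co-optimal transport term. -/
noncomputable def tpotObj (p : ℝ) (P P' : FinTopNet) (πv : P.X → P'.X → ℝ)
    (πe : Option P.Y → Option P'.Y → ℝ) : ℝ :=
  (∑ y : Option P.Y, ∑ y' : Option P'.Y, pdCost p P.ι P'.ι y y' * πe y y') +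
  (∑ x₁, ∑ x₁', ∑ x₂, ∑ x₂',
      |P.k x₁ x₂ - P'.k x₁' x₂'| ^ p * πv x₁ x₁' * πv x₂ x₂') +
  (∑ x, ∑ x', ∑ y : Option P.Y, ∑ y' : Option P'.Y,
      |ωbar P.ω x y - ωbar P'.ω x' y'| ^ p * πv x x' * πe y y')

/-- The Topological Optimal Transport cost `d_{TpOT,p}`. -/
noncomputable def dTpOT (p : ℝ) (P P' : FinTopNet) : ℝ :=
  sInf {r | ∃ πv : P.X → P'.X → ℝ, ∃ πe : Option P.Y → Option P'.Y → ℝ,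
    IsCoupling P.μ P'.μ πv ∧ IsAdmissible P.ν P'.ν πe ∧
    r = (tpotObj p P P' πv πe) ^ (1 / p)}

/-- Validity: `k` symmetric, `μ` a fully supported probability measure, `ν` fully
supported. -/
def FinTopNet.Valid (P : FinTopNet) : Prop :=
  (∀ x y, P.k x y = P.k y x) ∧ (∀ x, 0 < P.μ x) ∧ (∑ x, P.μ x = 1) ∧ (∀ y, 0 < P.ν y)

open scoped Classical

/-- Interpolation of augmented persistence points: matched pairs interpolate linearly, and
points matched to the virtual diagonal point interpolate towards their diagonal
projection. -/
noncomputable def ιinterp {Y Y' : Type*} (ι : Y → ℝ × ℝ) (ι' : Y' → ℝ × ℝ) (t : ℝ) :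
    Option Y × Option Y' → ℝ × ℝ
  | (some y, some y') => (1 - t) • ι y + t • ι' y'
  | (some y, none) => (1 - t) • ι y + t • diagProj (ι y)
  | (none, some y') => (1 - t) • diagProj (ι' y') + t • ι' y'
  | (none, none) => (0, 0)

/-- The interpolating measure topological network `P_t` along the convex geodesic
determined by the optimal couplings `(π^v, π^e)`. -/
noncomputable def interp (P P' : FinTopNet) (πv : P.X → P'.X → ℝ)
    (πe : Option P.Y → Option P'.Y → ℝ) (t : ℝ) : FinTopNet where
  X := P.X × P'.X
  Y := Option P.Y × Option P'.Y
  k := fun a b => (1 - t) * P.k a.1 b.1 + t * P'.k a.2 b.2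
  μ := fun a => πv a.1 a.2
  ι := ιinterp P.ι P'.ι t
  ν := fun y => πe y.1 y.2
  ω := fun a y => (1 - t) * ωbar P.ω a.1 y.1 + t * ωbar P'.ω a.2 y.2

/-- The identity (diagonal) coupling of a measure on `X̃` with itself. -/
noncomputable def diagV (P P' : FinTopNet) (πv : P.X → P'.X → ℝ) :
    P.X × P'.X → P.X × P'.X → ℝ :=
  fun a b => if a = b then πv a.1 a.2 else 0

/-- The identity (diagonal) admissible coupling of the hyperedge measure with itself. -/
noncomputable def diagE (P P' : FinTopNet) (πe : Option P.Y → Option P'.Y → ℝ) :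
    Option (Option P.Y × Option P'.Y) → Option (Option P.Y × Option P'.Y) → ℝ :=
  fun a b =>
    match a, b with
    | some y, some y' => if y = y' then πe y.1 y.2 else 0
    | _, _ => 0

/-! The diagonal couplings compare each point of the interpolating network only with itself,
so every distortion term of the TpOT objective between `P_s` and `P_t` is the corresponding
term between `P` and `P'` along `(π^v, π^e)` scaled by `(t - s)²`: linear interpolation gives
`k_s - k_t = (t - s) (k - k')`, likewise for `ω` and for persistence points (matched to a point
or to the diagonal projection). The objective is therefore `(t - s)² d²`, and as the diagonal
couplings are admissible its square root bounds `d_{TpOT,2}(P_s, P_t)`. -/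

lemma lpp_nonneg (p : ℝ) (a b : ℝ × ℝ) : 0 ≤ lpp p a b :=
  add_nonneg (Real.rpow_nonneg (abs_nonneg _) _) (Real.rpow_nonneg (abs_nonneg _) _)

lemma pdCost_nonneg {Y Y' : Type*} (p : ℝ) (ι : Y → ℝ × ℝ) (ι' : Y' → ℝ × ℝ)
    (y : Option Y) (y' : Option Y') : 0 ≤ pdCost p ι ι' y y' := by
  rcases y with _ | y <;> rcases y' with _ | y' <;> simp [pdCost, lpp_nonneg]

lemma tpotObj_nonneg (p : ℝ) (P P' : FinTopNet) {πv : P.X → P'.X → ℝ}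
    {πe : Option P.Y → Option P'.Y → ℝ} (hv : ∀ a b, 0 ≤ πv a b) (he : ∀ a b, 0 ≤ πe a b) :
    0 ≤ tpotObj p P P' πv πe := by
  unfold tpotObj
  have hpow (a : ℝ) : 0 ≤ |a| ^ p := Real.rpow_nonneg (abs_nonneg a) p
  refine add_nonneg (add_nonneg ?_ ?_) ?_ <;>
    repeat (first | apply sum_nonneg; intro _ _ | apply mul_nonneg)
  all_goals first | exact pdCost_nonneg .. | exact hpow _ | exact hv .. | exact he ..

lemma dTpOT_le_tpotObj_rpow {p : ℝ} {P P' : FinTopNet} {πv : P.X → P'.X → ℝ}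
    {πe : Option P.Y → Option P'.Y → ℝ} (hv : IsCoupling P.μ P'.μ πv)
    (he : IsAdmissible P.ν P'.ν πe) : dTpOT p P P' ≤ (tpotObj p P P' πv πe) ^ (1 / p) := by
  refine csInf_le ⟨0, ?_⟩ ⟨πv, πe, hv, he, rfl⟩
  rintro r ⟨σv, σe, hσv, hσe, rfl⟩
  exact Real.rpow_nonneg (tpotObj_nonneg p P P' hσv.1 hσe.1) _

section Interpolation

variable (P P' : FinTopNet) (πv : P.X → P'.X → ℝ) (πe : Option P.Y → Option P'.Y → ℝ)

lemma sum_diagV_left (a : P.X × P'.X) : ∑ b, diagV P P' πv a b = πv a.1 a.2 := by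
  simp [diagV]

lemma sum_diagV_right (b : P.X × P'.X) : ∑ a, diagV P P' πv a b = πv b.1 b.2 := by
  simp [diagV]

lemma sum_diagE_some_left (y : Option P.Y × Option P'.Y) :
    ∑ b, diagE P P' πe (some y) b = πe y.1 y.2 := by
  simp [diagE, Fintype.sum_option]

lemma sum_diagE_some_right (y : Option P.Y × Option P'.Y) :
    ∑ a, diagE P P' πe a (some y) = πe y.1 y.2 := by
  simp [diagE, Fintype.sum_option]

lemma diagV_isCoupling (hv : ∀ a b, 0 ≤ πv a b) (s t : ℝ) :
    IsCoupling (interp P P' πv πe s).μ (interp P P' πv πe t).μ (diagV P P' πv) := by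
  refine ⟨fun a b => ?_, sum_diagV_left P P' πv, sum_diagV_right P P' πv⟩
  unfold diagV
  split_ifs
  exacts [hv _ _, le_rfl]

lemma diagE_isAdmissible (he : ∀ a b, 0 ≤ πe a b) (s t : ℝ) :
    IsAdmissible (interp P P' πv πe s).ν (interp P P' πv πe t).ν (diagE P P' πe) := by
  refine ⟨?_, sum_diagE_some_left P P' πe, sum_diagE_some_right P P' πe, rfl⟩
  rintro (_ | a) (_ | b)
  all_goals simp only [diagE]
  all_goals first | exact le_rfl | split_ifs; exacts [he _ _, le_rfl]

lemma sum_sum_mul_diagE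
    (F : Option (Option P.Y × Option P'.Y) → Option (Option P.Y × Option P'.Y) → ℝ) :
    ∑ a, ∑ b, F a b * diagE P P' πe a b = ∑ y, F (some y) (some y) * πe y.1 y.2 := by
  simp [diagE, Fintype.sum_option, mul_ite]

lemma sum_sum_mul_diagV_mul_diagV
    (F : P.X × P'.X → P.X × P'.X → P.X × P'.X → P.X × P'.X → ℝ) :
    ∑ a₁, ∑ b₁, ∑ a₂, ∑ b₂, F a₁ b₁ a₂ b₂ * diagV P P' πv a₁ b₁ * diagV P P' πv a₂ b₂ =
      ∑ a₁, ∑ a₂, F a₁ a₁ a₂ a₂ * πv a₁.1 a₁.2 * πv a₂.1 a₂.2 := by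
  simp [diagV, mul_ite]

lemma sum_sum_mul_diagV_mul_diagE
    (F : P.X × P'.X → P.X × P'.X → Option (Option P.Y × Option P'.Y) →
      Option (Option P.Y × Option P'.Y) → ℝ) :
    ∑ a, ∑ b, ∑ y, ∑ y', F a b y y' * diagV P P' πv a b * diagE P P' πe y y' =
      ∑ a, ∑ y, F a a (some y) (some y) * πv a.1 a.2 * πe y.1 y.2 := by
  simp [diagV, diagE, Fintype.sum_option, mul_ite]

lemma abs_lerp_sub_lerp_rpow_two (a b s t : ℝ) :
    |((1 - s) * a + s * b) - ((1 - t) * a + t * b)| ^ (2 : ℝ) =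
      (t - s) ^ 2 * |a - b| ^ (2 : ℝ) := by
  simp only [Real.rpow_two, sq_abs]
  ring

lemma lpp_two_ιinterp {Y Y' : Type*} (ι : Y → ℝ × ℝ) (ι' : Y' → ℝ × ℝ) (s t : ℝ)
    (y : Option Y × Option Y') :
    lpp 2 (ιinterp ι ι' s y) (ιinterp ι ι' t y) = (t - s) ^ 2 * pdCost 2 ι ι' y.1 y.2 := by
  rcases y with ⟨_ | y, _ | y'⟩ <;>
    simp only [ιinterp, pdCost, lpp, diagProj, Prod.fst_add, Prod.snd_add, Prod.smul_fst,
      Prod.smul_snd, smul_eq_mul, Real.rpow_two, sq_abs] <;> ring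

lemma tpotObj_interp_diag (s t : ℝ) :
    tpotObj 2 (interp P P' πv πe s) (interp P P' πv πe t) (diagV P P' πv) (diagE P P' πe) =
      (t - s) ^ 2 * tpotObj 2 P P' πv πe := by
  unfold tpotObj
  -- the carriers `(interp ..).X`, `(interp ..).Y` are products only after unfolding `interp`
  erw [sum_sum_mul_diagE, sum_sum_mul_diagV_mul_diagV, sum_sum_mul_diagV_mul_diagE]
  simp only [interp, ωbar, pdCost, lpp_two_ιinterp, abs_lerp_sub_lerp_rpow_two,
    Fintype.sum_prod_type, mul_add, Finset.mul_sum, mul_assoc]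

end Interpolation

theorem stmt_13_general (P P' : FinTopNet)
    (πv : P.X → P'.X → ℝ) (πe : Option P.Y → Option P'.Y → ℝ)
    (hπv : IsCoupling P.μ P'.μ πv) (hπe : IsAdmissible P.ν P'.ν πe)
    (hopt : (tpotObj 2 P P' πv πe) ^ (1 / (2 : ℝ)) = dTpOT 2 P P') :
    ∀ s t : ℝ, 0 ≤ s → s ≤ t → t ≤ 1 →
      IsCoupling (interp P P' πv πe s).μ (interp P P' πv πe t).μ (diagV P P' πv) ∧
      IsAdmissible (interp P P' πv πe s).ν (interp P P' πv πe t).ν (diagE P P' πe) ∧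
      (tpotObj 2 (interp P P' πv πe s) (interp P P' πv πe t)
          (diagV P P' πv) (diagE P P' πe)) ^ (1 / (2 : ℝ)) ≤
        (t - s) * dTpOT 2 P P' ∧
      dTpOT 2 (interp P P' πv πe s) (interp P P' πv πe t) ≤ (t - s) * dTpOT 2 P P' := by
  intro s t _ hst _
  have hcoup := diagV_isCoupling P P' πv πe hπv.1 s t
  have hadm := diagE_isAdmissible P P' πv πe hπe.1 s t
  have hcost : (tpotObj 2 (interp P P' πv πe s) (interp P P' πv πe t)
      (diagV P P' πv) (diagE P P' πe)) ^ (1 / (2 : ℝ)) = (t - s) * dTpOT 2 P P' := by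
    rw [tpotObj_interp_diag, ← hopt,
      Real.mul_rpow (sq_nonneg _) (tpotObj_nonneg 2 P P' hπv.1 hπe.1), ← Real.sqrt_eq_rpow,
      Real.sqrt_sq (sub_nonneg.2 hst)]
  exact ⟨hcoup, hadm, hcost.le, (dTpOT_le_tpotObj_rpow hcoup hadm).trans hcost.le⟩

/-- Convex geodesics for `d_{TpOT,2}`: if `(π^v, π^e)` are optimal couplings realising
`d = d_{TpOT,2}(P, P')` and `P_t` is the interpolating network, then for `0 ≤ s ≤ t ≤ 1`
the identity couplings `1_{π^v}, 1_{π^e}` are couplings between `P_s` and `P_t` whose cost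
is at most `(t − s) d`, whence `d_{TpOT,2}(P_s, P_t) ≤ (t − s) d`. -/
theorem stmt_13 (P P' : FinTopNet) (hP : P.Valid) (hP' : P'.Valid)
    (πv : P.X → P'.X → ℝ) (πe : Option P.Y → Option P'.Y → ℝ)
    (hπv : IsCoupling P.μ P'.μ πv) (hπe : IsAdmissible P.ν P'.ν πe)
    (hopt : (tpotObj 2 P P' πv πe) ^ (1 / (2 : ℝ)) = dTpOT 2 P P') :
    ∀ s t : ℝ, 0 ≤ s → s ≤ t → t ≤ 1 →
      IsCoupling (interp P P' πv πe s).μ (interp P P' πv πe t).μ (diagV P P' πv) ∧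
      IsAdmissible (interp P P' πv πe s).ν (interp P P' πv πe t).ν (diagE P P' πe) ∧
      (tpotObj 2 (interp P P' πv πe s) (interp P P' πv πe t)
          (diagV P P' πv) (diagE P P' πe)) ^ (1 / (2 : ℝ)) ≤
        (t - s) * dTpOT 2 P P' ∧
      dTpOT 2 (interp P P' πv πe s) (interp P P' πv πe t) ≤ (t - s) * dTpOT 2 P P' :=
  stmt_13_general P P' πv πe hπv hπe hopt
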